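/- arXiv:2509.07350 — 4 statements merged into one kernel-verified Lean document; each statement's English description precedes it below -/
import Mathlib

section
/- In the degenerating setup, assume that q_k = 1 for at least one index k with d₁ < k ≤ e. Then there exist ζ ∈ ℂ with |ζ| = 1 and a strictly increasing sequence of indices (n_j) such that for every compact set K ⊆ ℂ disjoint from {q_{d₁+1}, …, q_e} and from the poles of B, eventually (in j) the function B_{n_j} has no pole on K and B_{n_j} converges to ζ·B uniformly on K. -/
/-!
The normalising constants `(1 - conj aₖ) / (1 - aₖ)` of `Bₙ` lie on the unit circle, so along a
subsequence they converge, to `μₖ` say; for an interior zero `μₖ` is the constant of `B`, by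
continuity. Viewed as a function of its zeros, its constants and `z`, a Blaschke product is jointly
continuous away from its poles, hence converges uniformly on a compact `K` once the zeros and
constants converge and the limit has no pole on `K`. Finally, a zero `q` of modulus one contributes
the factor `μ · (z - q) / (1 - conj q · z) = -μ q`, which is constant in `z`; these factors make up
`ζ`.
-/

open Filter

/-- The Blaschke product with exponent `m` and zero list `a : Fin e → ℂ`. -/
noncomputable def blaschke (m : ℕ) {e : ℕ} (a : Fin e → ℂ) (z : ℂ) : ℂ :=
  z ^ m * ∏ k, ((1 - (starRingEnd ℂ) (a k)) / (1 - a k) *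
    ((z - a k) / (1 - (starRingEnd ℂ) (a k) * z)))

open Topology Set

theorem TendstoUniformlyOn.comp_tendsto {ι ι' α β : Type*} [UniformSpace β] {F : ι → α → β}
    {f : α → β} {l : Filter ι} {s : Set α} (h : TendstoUniformlyOn F f l s) {g : ι' → ι}
    {l' : Filter ι'} (hg : Tendsto g l' l) : TendstoUniformlyOn (fun i => F (g i)) f l' s := by
  rw [tendstoUniformlyOn_iff_tendsto] at h ⊢
  exact h.comp (hg.prodMap tendsto_id)

theorem ContinuousOn.tendstoUniformlyOn_of_mem_nhds {α β γ : Type*} [UniformSpace α]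
    [LocallyCompactSpace α] [UniformSpace β] [UniformSpace γ] {f : α → β → γ} {x : α}
    {U : Set α} {K : Set β} (hxU : U ∈ 𝓝 x) (hK : IsCompact K) (h : ContinuousOn ↿f (U ×ˢ K)) :
    TendstoUniformlyOn f (f x) (𝓝 x) K := by
  obtain ⟨L, hxL, hLU, hL⟩ := LocallyCompactSpace.local_compact_nhds _ _ hxU
  have hf : UniformContinuousOn ↿f (L ×ˢ K) :=
    (hL.prod hK).uniformContinuousOn_of_continuous (h.mono (prod_mono hLU subset_rfl))
  simpa only [nhdsWithin_eq_nhds.2 hxL] using hf.tendstoUniformlyOn (mem_of_mem_nhds hxL)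

noncomputable def blaschkeConst (a : ℂ) : ℂ := (1 - (starRingEnd ℂ) a) / (1 - a)

/-- `blaschke` with the normalising constants `blaschkeConst (a k)` replaced by free parameters `c`,
so that constants and zeros can be passed to the limit separately. -/
noncomputable def blaschkeWith (m : ℕ) {e : ℕ} (a c : Fin e → ℂ) (z : ℂ) : ℂ :=
  z ^ m * ∏ k, c k * ((z - a k) / (1 - (starRingEnd ℂ) (a k) * z))

theorem blaschke_eq_blaschkeWith (m : ℕ) {e : ℕ} (a : Fin e → ℂ) :
    blaschke m a = blaschkeWith m a (fun k => blaschkeConst (a k)) := rfl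

theorem norm_blaschkeConst {a : ℂ} (ha : a ≠ 1) : ‖blaschkeConst a‖ = 1 := by
  have h : (1 : ℂ) - a ≠ 0 := sub_ne_zero.2 ha.symm
  rw [blaschkeConst, norm_div, show 1 - (starRingEnd ℂ) a = (starRingEnd ℂ) (1 - a) by simp,
    RCLike.norm_conj, div_self (norm_ne_zero_iff.2 h)]

theorem continuousAt_blaschkeConst {a : ℂ} (ha : a ≠ 1) : ContinuousAt blaschkeConst a :=
  (continuousAt_const.sub Complex.continuous_conj.continuousAt).div
    (continuousAt_const.sub continuousAt_id) (sub_ne_zero.2 ha.symm)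

theorem conj_mul_self_of_norm_eq_one {q : ℂ} (hq : ‖q‖ = 1) : (starRingEnd ℂ) q * q = 1 := by
  rw [Complex.conj_mul', hq]
  norm_num

theorem one_sub_conj_mul_ne_zero_of_norm_eq_one {q z : ℂ} (hq : ‖q‖ = 1) (hz : z ≠ q) :
    1 - (starRingEnd ℂ) q * z ≠ 0 := by
  rw [show 1 - (starRingEnd ℂ) q * z = (starRingEnd ℂ) q * (q - z) by
    linear_combination -conj_mul_self_of_norm_eq_one hq]
  exact mul_ne_zero (by simp [← norm_ne_zero_iff, hq]) (sub_ne_zero.2 hz.symm)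

theorem blaschkeFactor_of_norm_eq_one {q z : ℂ} (hq : ‖q‖ = 1) (hz : z ≠ q) :
    (z - q) / (1 - (starRingEnd ℂ) q * z) = -q := by
  rw [div_eq_iff (one_sub_conj_mul_ne_zero_of_norm_eq_one hq hz)]
  linear_combination (-z) * conj_mul_self_of_norm_eq_one hq

theorem continuousOn_blaschkeWith (m e : ℕ) :
    ContinuousOn (fun p : ((Fin e → ℂ) × (Fin e → ℂ)) × ℂ => blaschkeWith m p.1.1 p.1.2 p.2)
      {p | ∀ k, 1 - (starRingEnd ℂ) (p.1.1 k) * p.2 ≠ 0} := by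
  unfold blaschkeWith
  exact ContinuousOn.mul (by fun_prop) (continuousOn_finsetProd _ fun k _ =>
    ContinuousOn.mul (by fun_prop) (ContinuousOn.div (by fun_prop) (by fun_prop) fun p hp => hp k))

theorem eventually_nhds_forall_one_sub_conj_mul_ne_zero {e : ℕ} {a₀ : Fin e → ℂ} {K : Set ℂ}
    (hK : IsCompact K) (hpole : ∀ z ∈ K, ∀ k, 1 - (starRingEnd ℂ) (a₀ k) * z ≠ 0) :
    ∀ᶠ a in 𝓝 a₀, ∀ z ∈ K, ∀ k, 1 - (starRingEnd ℂ) (a k) * z ≠ 0 :=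
  hK.eventually_forall_of_forall_eventually fun z hz =>
    eventually_all.2 fun k =>
      (show Continuous fun p : (Fin e → ℂ) × ℂ => 1 - (starRingEnd ℂ) (p.1 k) * p.2 by
        fun_prop).continuousAt.eventually_ne (hpole z hz k)

theorem tendstoUniformlyOn_blaschkeWith (m : ℕ) {e : ℕ} {ι : Type*} {l : Filter ι}
    {a c : ι → Fin e → ℂ} {a₀ c₀ : Fin e → ℂ} {K : Set ℂ} (hK : IsCompact K)
    (hpole : ∀ z ∈ K, ∀ k, 1 - (starRingEnd ℂ) (a₀ k) * z ≠ 0)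
    (ha : Tendsto a l (𝓝 a₀)) (hc : Tendsto c l (𝓝 c₀)) :
    TendstoUniformlyOn (fun i => blaschkeWith m (a i) (c i)) (blaschkeWith m a₀ c₀) l K := by
  set U := {a : Fin e → ℂ | ∀ z ∈ K, ∀ k, 1 - (starRingEnd ℂ) (a k) * z ≠ 0}
  have hU : U ×ˢ univ ∈ 𝓝 (a₀, c₀) :=
    prod_mem_nhds (eventually_nhds_forall_one_sub_conj_mul_ne_zero hK hpole) univ_mem
  have hF : ContinuousOn ↿(fun p : (Fin e → ℂ) × (Fin e → ℂ) => blaschkeWith m p.1 p.2)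
      ((U ×ˢ univ) ×ˢ K) :=
    (continuousOn_blaschkeWith m e).mono fun p hp k => hp.1.1 p.2 hp.2 k
  -- elaborated without expected type: unifying with the goal first times out
  exact ((hF.tendstoUniformlyOn_of_mem_nhds hU hK).comp_tendsto (ha.prodMk_nhds hc) :)

theorem exists_subseq_tendsto_blaschkeConst {e : ℕ} (A : ℕ → Fin e → ℂ) (hA : ∀ n k, A n k ≠ 1) :
    ∃ μ : Fin e → ℂ, (∀ k, ‖μ k‖ = 1) ∧ ∃ φ : ℕ → ℕ, StrictMono φ ∧
      Tendsto (fun j k => blaschkeConst (A (φ j) k)) atTop (𝓝 μ) := by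
  obtain ⟨μ, hμ, φ, hφ, hlim⟩ :=
    (isCompact_univ_pi fun _ : Fin e => isCompact_sphere (0 : ℂ) 1).tendsto_subseq
      (x := fun n k => blaschkeConst (A n k))
      fun n k _ => by simpa using norm_blaschkeConst (hA n k)
  exact ⟨μ, fun k => by simpa using hμ k trivial, φ, hφ, hlim⟩

theorem blaschkeWith_eq_mul_blaschke (m : ℕ) {d r : ℕ} {q c : Fin (d + r) → ℂ} {z : ℂ}
    (hc : ∀ i : Fin d, c (Fin.castAdd r i) = blaschkeConst (q (Fin.castAdd r i)))
    (hq : ∀ i : Fin r, ‖q (Fin.natAdd d i)‖ = 1) (hz : ∀ i : Fin r, z ≠ q (Fin.natAdd d i)) :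
    blaschkeWith m q c z = (∏ i : Fin r, c (Fin.natAdd d i) * -q (Fin.natAdd d i)) *
      blaschke m (fun i => q (Fin.castAdd r i)) z := by
  simp only [blaschke_eq_blaschkeWith, blaschkeWith, Fin.prod_univ_add, hc,
    blaschkeFactor_of_norm_eq_one (hq _) (hz _)]
  ring

theorem stmt2_general (m e d₁ : ℕ) (hd : d₁ < e)
    (q : Fin e → ℂ)
    (hqin : ∀ k : Fin e, (k : ℕ) < d₁ → ‖q k‖ < 1)
    (hqbd : ∀ k : Fin e, d₁ ≤ (k : ℕ) → ‖q k‖ = 1)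
    (A : ℕ → Fin e → ℂ)
    (hA : ∀ n k, ‖A n k‖ < 1)
    (hAconv : ∀ k, Tendsto (fun n => A n k) atTop (nhds (q k))) :
    ∃ ζ : ℂ, ‖ζ‖ = 1 ∧ ∃ φ : ℕ → ℕ, StrictMono φ ∧
      ∀ K : Set ℂ, IsCompact K →
        (∀ z ∈ K, ∀ k : Fin e, d₁ ≤ (k : ℕ) → z ≠ q k) →
        (∀ z ∈ K, ∀ k : Fin e, (k : ℕ) < d₁ → 1 - (starRingEnd ℂ) (q k) * z ≠ 0) →
        (∀ᶠ j in atTop, ∀ z ∈ K, ∀ k : Fin e, 1 - (starRingEnd ℂ) (A (φ j) k) * z ≠ 0) ∧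
        TendstoUniformlyOn (fun j => blaschke m (A (φ j)))
          (fun z => ζ * blaschke m (fun k : Fin d₁ => q (Fin.castLE hd.le k)) z) atTop K := by
  obtain ⟨r, rfl⟩ := Nat.exists_eq_add_of_le hd.le
  have ne_one {a : ℂ} (ha : ‖a‖ < 1) : a ≠ 1 := by rintro rfl; simp at ha
  obtain ⟨μ, hμ, φ, hφ, hμlim⟩ := exists_subseq_tendsto_blaschkeConst A fun n k => ne_one (hA n k)
  have hAφ : Tendsto (fun j => A (φ j)) atTop (𝓝 q) :=
    tendsto_pi_nhds.2 fun k => (hAconv k).comp hφ.tendsto_atTop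
  have hμq (i : Fin d₁) : μ (Fin.castAdd r i) = blaschkeConst (q (Fin.castAdd r i)) := by
    have hqi := ne_one (hqin (Fin.castAdd r i) i.isLt)
    exact tendsto_nhds_unique ((continuous_apply _).tendsto μ |>.comp hμlim)
      ((continuousAt_blaschkeConst hqi).tendsto.comp ((tendsto_pi_nhds.1 hAφ) _))
  refine ⟨∏ i : Fin r, μ (Fin.natAdd d₁ i) * -q (Fin.natAdd d₁ i), ?_, φ, hφ,
    fun K hK hKq hKp => ?_⟩
  · simp [hμ, hqbd]
  have hpole : ∀ z ∈ K, ∀ k, 1 - (starRingEnd ℂ) (q k) * z ≠ 0 := fun z hz k =>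
    if hk : (k : ℕ) < d₁ then hKp z hz k hk
    else one_sub_conj_mul_ne_zero_of_norm_eq_one (hqbd k (not_lt.1 hk)) (hKq z hz k (not_lt.1 hk))
  refine ⟨hAφ.eventually (eventually_nhds_forall_one_sub_conj_mul_ne_zero hK hpole), ?_⟩
  simp only [blaschke_eq_blaschkeWith]
  refine (tendstoUniformlyOn_blaschkeWith m hK hpole hAφ hμlim).congr_right fun z hz => ?_
  exact blaschkeWith_eq_mul_blaschke m hμq (fun i => hqbd _ (by simp))
    (fun i => hKq z hz _ (by simp))

/-- In the degenerating setup, if `q k = 1` for some boundary index `k`,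
then there exist `ζ` of modulus `1` and a strictly increasing sequence of indices `(n j)`
such that for every compact `K ⊆ ℂ` disjoint from the boundary points `q k` (for `d₁ ≤ k`)
and from the poles of `B`, eventually (in `j`) `B (n j)` has no pole on `K` and
`B (n j) → ζ·B` uniformly on `K`. -/
theorem stmt2 (m e d₁ : ℕ) (hm : 1 ≤ m) (he : 1 ≤ e) (hd : d₁ < e)
    (q : Fin e → ℂ)
    (hqin : ∀ k : Fin e, (k : ℕ) < d₁ → ‖q k‖ < 1)
    (hqbd : ∀ k : Fin e, d₁ ≤ (k : ℕ) → ‖q k‖ = 1)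
    (A : ℕ → Fin e → ℂ)
    (hA : ∀ n k, ‖A n k‖ < 1)
    (hAconv : ∀ k, Tendsto (fun n => A n k) atTop (nhds (q k)))
    (hq1 : ∃ k : Fin e, d₁ ≤ (k : ℕ) ∧ q k = 1) :
    ∃ ζ : ℂ, ‖ζ‖ = 1 ∧ ∃ φ : ℕ → ℕ, StrictMono φ ∧
      ∀ K : Set ℂ, IsCompact K →
        (∀ z ∈ K, ∀ k : Fin e, d₁ ≤ (k : ℕ) → z ≠ q k) →
        (∀ z ∈ K, ∀ k : Fin e, (k : ℕ) < d₁ → 1 - (starRingEnd ℂ) (q k) * z ≠ 0) →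
        (∀ᶠ j in atTop, ∀ z ∈ K, ∀ k : Fin e, 1 - (starRingEnd ℂ) (A (φ j) k) * z ≠ 0) ∧
        TendstoUniformlyOn (fun j => blaschke m (A (φ j)))
          (fun z => ζ * blaschke m (fun k : Fin d₁ => q (Fin.castLE hd.le k)) z) atTop K :=
  stmt2_general m e d₁ hd q hqin hqbd A hA hAconv
end

section
/- Fix integers m ≥ 1, e ≥ 1, 0 ≤ d₁ ≤ e − 1, points a_1, …, a_{d₁} ∈ 𝔻 and q_{d₁+1}, …, q_e ∈ ∂𝔻, and assume q_k = 1 for at least one index k > d₁. Let B be the Blaschke product with exponent m and zero list (a_1, …, a_{d₁}). Then for every ζ ∈ ℂ with |ζ| = 1 there exist sequences (a_{k,n})_{n≥1} in 𝔻 (1 ≤ k ≤ e) with a_{k,n} → a_k for k ≤ d₁ and a_{k,n} → q_k for k > d₁, such that the Blaschke products B_n with exponent m and zero list (a_{1,n}, …, a_{e,n}) converge to ζ·B uniformly on every compact subset of ℂ disjoint from {q_{d₁+1}, …, q_e} and from the poles of B. -/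
/-!
Let `‖q‖ = 1` and `a → q` from inside the disc. Since `1 - q̄ z = q̄ (q - z)`, the Möbius part
`(z - a) / (1 - ā z)` of the Blaschke factor tends to `-q` uniformly on compact sets avoiding `q`,
so the factor tends to the constant `-q · lim (1 - ā) / (1 - a)`. For `q ≠ 1` that limit is `-q̄`
and the factor tends to `1`. For `q = 1` and `a = 1 - t (u + t)` with `‖u‖ = 1` the ratio is
`(ū + t) / (u + t) → ū²`, so the factor tends to `-ū²`, which is an arbitrary unimodular number
as `u` ranges over the right half of the circle (where `a` stays in the disc). Letting one zero
approach `1` in the direction giving `ζ` and the other boundary zeros approach their limits in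
directions giving `1`, the Blaschke products tend to `ζ B`.
-/

open Filter

open Topology ComplexConjugate

theorem IsCompact.tendstoUniformlyOn_of_continuousAt {X Y Z : Type*} [TopologicalSpace X]
    [TopologicalSpace Y] [UniformSpace Z] {f : X → Y → Z} {K : Set Y} (hK : IsCompact K)
    {x₀ : X} (hf : ∀ y ∈ K, ContinuousAt (Function.uncurry f) (x₀, y)) :
    TendstoUniformlyOn f (f x₀) (𝓝 x₀) K := by
  intro U hU
  obtain ⟨V, hV, -, hVU⟩ := comp_symm_of_uniformity hU
  refine hK.eventually_forall_of_forall_eventually fun y hy => ?_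
  have hfy : ContinuousAt (f x₀) y :=
    (hf y hy).comp (f := fun y' => (x₀, y')) (by fun_prop)
  filter_upwards [(hf y hy).eventually (mem_nhds_left (f x₀ y) hV),
    continuousAt_snd.eventually (hfy.eventually (mem_nhds_right (f x₀ y) hV))]
    with p hp₁ hp₂
  exact hVU (SetRel.prodMk_mem_comp hp₂ hp₁)

theorem tendstoUniformlyOn_const_family {ι α β : Type*} [UniformSpace β] {l : Filter ι}
    (f : α → β) (s : Set α) : TendstoUniformlyOn (fun _ => f) f l s :=
  fun _ hU => Eventually.of_forall fun _ _ _ => refl_mem_uniformity hU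

section Compact

variable {ι X R : Type*} [TopologicalSpace X] [SeminormedCommRing R] {K : Set X} {l : Filter ι}

theorem IsCompact.tendstoUniformlyOn_mul (hK : IsCompact K) {F G : ι → X → R} {f g : X → R}
    (hF : TendstoUniformlyOn F f l K) (hG : TendstoUniformlyOn G g l K)
    (hf : ContinuousOn f K) (hg : ContinuousOn g K) :
    TendstoUniformlyOn (fun n x => F n x * G n x) (fun x => f x * g x) l K := by
  rw [← tendstoLocallyUniformlyOn_iff_tendstoUniformlyOn_of_compact hK] at hF hG ⊢
  exact hF.fun_mul₀ hG hf hg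

theorem IsCompact.tendstoUniformlyOn_finset_prod {κ : Type*} (hK : IsCompact K) (s : Finset κ)
    {F : κ → ι → X → R} {f : κ → X → R}
    (hF : ∀ k ∈ s, TendstoUniformlyOn (F k) (f k) l K) (hf : ∀ k ∈ s, ContinuousOn (f k) K) :
    TendstoUniformlyOn (fun n x => ∏ k ∈ s, F k n x) (fun x => ∏ k ∈ s, f k x) l K := by
  classical
  induction s using Finset.induction_on with
  | empty => simpa using (tendsto_const_nhds (x := (1 : R)) (f := l)).tendstoUniformlyOn_const K
  | insert k s hk ih =>
    simp only [Finset.prod_insert hk]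
    rw [Finset.forall_mem_insert] at hF hf
    exact hK.tendstoUniformlyOn_mul hF.1 (ih hF.2 hf.2) hf.1 (continuousOn_finsetProd s hf.2)

end Compact

theorem Fin.prod_castLE_eq_prod_filter {M : Type*} [CommMonoid M] {n m : ℕ} (h : n ≤ m)
    (f : Fin m → M) :
    ∏ i : Fin n, f (Fin.castLE h i) =
      ∏ i ∈ Finset.univ.filter (fun i : Fin m => (i : ℕ) < n), f i := by
  refine (Finset.prod_map Finset.univ (Fin.castLEEmb h) f).symm.trans
    (congrArg (fun s => ∏ i ∈ s, f i) ?_)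
  ext i
  simp only [Finset.mem_map, Finset.mem_univ, true_and, Finset.mem_filter, Fin.castLEEmb_apply]
  exact ⟨fun ⟨j, hj⟩ => hj ▸ j.isLt, fun hi => ⟨⟨i, hi⟩, rfl⟩⟩

theorem Complex.mul_conj_eq_one_of_norm_eq_one {q : ℂ} (hq : ‖q‖ = 1) : q * conj q = 1 := by
  rw [mul_conj', hq]; norm_num

theorem Complex.one_sub_conj_mul_ne_zero {q z : ℂ} (hq : ‖q‖ = 1) (hz : z ≠ q) :
    1 - conj q * z ≠ 0 := by
  intro h
  apply hz
  linear_combination (-q) * h - z * mul_conj_eq_one_of_norm_eq_one hq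

theorem Complex.exists_re_nonneg_sq_eq (z : ℂ) : ∃ w : ℂ, w ^ 2 = z ∧ 0 ≤ w.re := by
  obtain ⟨v, hv⟩ := IsAlgClosed.exists_pow_nat_eq z two_pos
  rcases le_total 0 v.re with h | h
  · exact ⟨v, hv, h⟩
  · exact ⟨-v, by rw [neg_sq, hv], by simpa using h⟩

theorem Complex.exists_norm_eq_one_re_nonneg_neg_conj_sq_eq {c : ℂ} (hc : ‖c‖ = 1) :
    ∃ u : ℂ, ‖u‖ = 1 ∧ 0 ≤ u.re ∧ -conj u ^ 2 = c := by
  obtain ⟨w, hw, hw_re⟩ := exists_re_nonneg_sq_eq (-c)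
  refine ⟨conj w, ?_, by simpa using hw_re, by rw [conj_conj, hw, neg_neg]⟩
  rw [norm_conj, ← pow_eq_one_iff_of_nonneg (norm_nonneg w) two_ne_zero, ← norm_pow, hw,
    norm_neg, hc]

noncomputable def blaschkeFactor (a z : ℂ) : ℂ :=
  (1 - conj a) / (1 - a) * ((z - a) / (1 - conj a * z))

theorem blaschke_eq_mul_prod_blaschkeFactor (m : ℕ) {e : ℕ} (a : Fin e → ℂ) (z : ℂ) :
    blaschke m a z = z ^ m * ∏ k, blaschkeFactor (a k) z := rfl

theorem tendstoUniformlyOn_blaschke {ι : Type*} {l : Filter ι} {K : Set ℂ} (hK : IsCompact K)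
    (m : ℕ) {e : ℕ} {A : ι → Fin e → ℂ} {L : Fin e → ℂ → ℂ}
    (hA : ∀ k, TendstoUniformlyOn (fun n => blaschkeFactor (A n k)) (L k) l K)
    (hL : ∀ k, ContinuousOn (L k) K) :
    TendstoUniformlyOn (fun n => blaschke m (A n)) (fun z => z ^ m * ∏ k, L k z) l K :=
  hK.tendstoUniformlyOn_mul (tendstoUniformlyOn_const_family _ K)
    (hK.tendstoUniformlyOn_finset_prod _ (fun k _ => hA k) fun k _ => hL k)
    (continuousOn_pow m) (continuousOn_finsetProd _ fun k _ => hL k)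

theorem pow_mul_prod_ite_eq_mul_blaschke (m : ℕ) {d e : ℕ} (h : d ≤ e) (a c : Fin e → ℂ)
    (z : ℂ) :
    z ^ m * ∏ k : Fin e, (if (k : ℕ) < d then blaschkeFactor (a k) z else c k) =
      (∏ k ∈ Finset.univ.filter (fun k : Fin e => ¬ (k : ℕ) < d), c k) *
        blaschke m (fun k : Fin d => a (Fin.castLE h k)) z := by
  rw [Finset.prod_ite, blaschke_eq_mul_prod_blaschkeFactor,
    Fin.prod_castLE_eq_prod_filter h (fun k => blaschkeFactor (a k) z)]
  ring

theorem tendstoUniformlyOn_mobius {ι : Type*} {l : Filter ι} {K : Set ℂ} (hK : IsCompact K)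
    {q : ℂ} (hq : ‖q‖ = 1) (hKq : q ∉ K) {a : ι → ℂ} (ha : Tendsto a l (𝓝 q)) :
    TendstoUniformlyOn (fun n z => (z - a n) / (1 - conj (a n) * z)) (fun _ => -q) l K := by
  have hne : ∀ z ∈ K, z ≠ q := fun z hz h => hKq (h ▸ hz)
  have hq' := hK.tendstoUniformlyOn_of_continuousAt (f := fun a z => (z - a) / (1 - conj a * z))
    (x₀ := q) fun z hz => (continuousAt_snd.sub continuousAt_fst).div
      (continuousAt_const.sub ((Complex.continuous_conj.continuousAt.comp continuousAt_fst).mul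
        continuousAt_snd)) (Complex.one_sub_conj_mul_ne_zero hq (hne z hz))
  have hval : Set.EqOn (fun z => (z - q) / (1 - conj q * z)) (fun _ => -q) K := fun z hz => by
    rw [div_eq_iff (Complex.one_sub_conj_mul_ne_zero hq (hne z hz))]
    linear_combination (-z) * Complex.mul_conj_eq_one_of_norm_eq_one hq
  exact fun U hU => ha.eventually (hq'.congr_right hval U hU)

theorem tendstoUniformlyOn_blaschkeFactor {ι : Type*} {l : Filter ι} {K : Set ℂ}
    (hK : IsCompact K) {q c : ℂ} (hq : ‖q‖ = 1) (hKq : q ∉ K) {a : ι → ℂ}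
    (ha : Tendsto a l (𝓝 q)) (hc : Tendsto (fun n => (1 - conj (a n)) / (1 - a n)) l (𝓝 c)) :
    TendstoUniformlyOn (fun n => blaschkeFactor (a n)) (fun _ => c * -q) l K :=
  hK.tendstoUniformlyOn_mul (hc.tendstoUniformlyOn_const K)
    (tendstoUniformlyOn_mobius hK hq hKq ha) continuousOn_const continuousOn_const

theorem tendsto_one_sub_conj_div_one_sub {q : ℂ} (hq : ‖q‖ = 1) (hq1 : q ≠ 1) :
    Tendsto (fun a => (1 - conj a) / (1 - a)) (𝓝 q) (𝓝 (-conj q)) := by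
  have h1q : 1 - q ≠ 0 := sub_ne_zero.mpr (Ne.symm hq1)
  have hval : (1 - conj q) / (1 - q) = -conj q := by
    rw [div_eq_iff h1q]
    linear_combination -Complex.mul_conj_eq_one_of_norm_eq_one hq
  rw [← hval]
  exact ((continuous_const.sub Complex.continuous_conj).continuousAt).div
    (continuous_const.sub continuous_id).continuousAt h1q

/-- For `‖u‖ = 1` and `re u ≥ 0` this tends to `q` from inside the disc as `t → 0⁺`; the `t²`
term keeps it inside also when `u` is purely imaginary. -/
def boundaryApproach (q u : ℂ) (t : ℝ) : ℂ := q * (1 - t * u - (t : ℂ) ^ 2)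

theorem norm_boundaryApproach_lt_one {q u : ℂ} (hq : ‖q‖ = 1) (hu : ‖u‖ = 1) (hre : 0 ≤ u.re)
    {t : ℝ} (ht₀ : 0 < t) (ht₁ : t < 1) : ‖boundaryApproach q u t‖ < 1 := by
  have hu' : u.re * u.re + u.im * u.im = 1 := by
    rw [← Complex.normSq_apply, ← Complex.sq_norm, hu, one_pow]
  have ht : t * t < 1 := by nlinarith
  rw [boundaryApproach, norm_mul, hq, one_mul, ← sq_lt_one_iff₀ (norm_nonneg _), Complex.sq_norm,
    Complex.normSq_apply]
  simp only [Complex.sub_re, Complex.sub_im, Complex.mul_re, Complex.mul_im, Complex.one_re,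
    Complex.one_im, Complex.ofReal_re, Complex.ofReal_im, sq]
  nlinarith [mul_nonneg (mul_nonneg ht₀.le hre) (sub_nonneg.mpr ht.le),
    mul_pos (mul_pos ht₀ ht₀) (sub_pos.mpr ht)]

theorem tendsto_boundaryApproach (q u : ℂ) : Tendsto (boundaryApproach q u) (𝓝 0) (𝓝 q) := by
  have : Continuous (boundaryApproach q u) := by unfold boundaryApproach; fun_prop
  simpa [boundaryApproach] using this.tendsto 0

theorem tendsto_one_sub_conj_div_one_sub_boundaryApproach_one {u : ℂ} (hu : ‖u‖ = 1) :
    Tendsto (fun t => (1 - conj (boundaryApproach 1 u t)) / (1 - boundaryApproach 1 u t))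
      (𝓝[≠] 0) (𝓝 (conj u ^ 2)) := by
  have hu₀ : u ≠ 0 := norm_ne_zero_iff.mp (by simp [hu])
  have heq : (fun t : ℝ => (conj u + t) / (u + t)) =ᶠ[𝓝[≠] 0]
      fun t => (1 - conj (boundaryApproach 1 u t)) / (1 - boundaryApproach 1 u t) := by
    filter_upwards [self_mem_nhdsWithin] with t ht
    have ht' : (t : ℂ) ≠ 0 := Complex.ofReal_ne_zero.mpr ht
    rw [← mul_div_mul_left _ _ ht']
    simp only [boundaryApproach, map_mul, map_sub, map_one, map_pow, Complex.conj_ofReal]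
    ring
  have hval : conj u / u = conj u ^ 2 := by
    rw [div_eq_iff hu₀]
    linear_combination (-conj u) * Complex.mul_conj_eq_one_of_norm_eq_one hu
  refine Tendsto.congr' heq ?_
  rw [← hval]
  refine Tendsto.mono_left ?_ nhdsWithin_le_nhds
  have : ContinuousAt (fun t : ℝ => (conj u + t) / (u + t)) 0 :=
    (by fun_prop : Continuous fun t : ℝ => conj u + t).continuousAt.div (by fun_prop) (by simpa)
  simpa using this.tendsto

theorem tendstoUniformlyOn_blaschkeFactor_boundaryApproach {ι : Type*} {l : Filter ι}
    {K : Set ℂ} (hK : IsCompact K) {q u : ℂ} (hq : ‖q‖ = 1) (hu : ‖u‖ = 1) (hKq : q ∉ K)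
    {t : ι → ℝ} (ht : Tendsto t l (𝓝[≠] 0)) :
    TendstoUniformlyOn (fun n => blaschkeFactor (boundaryApproach q u (t n)))
      (fun _ => if q = 1 then -conj u ^ 2 else 1) l K := by
  have ha : Tendsto (fun n => boundaryApproach q u (t n)) l (𝓝 q) :=
    (tendsto_boundaryApproach q u).comp (ht.mono_right nhdsWithin_le_nhds)
  split_ifs with hq1
  · subst hq1
    simpa using tendstoUniformlyOn_blaschkeFactor hK hq hKq ha
      ((tendsto_one_sub_conj_div_one_sub_boundaryApproach_one hu).comp ht)
  · convert tendstoUniformlyOn_blaschkeFactor hK hq hKq ha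
      ((tendsto_one_sub_conj_div_one_sub hq hq1).comp ha) using 2
    linear_combination -Complex.mul_conj_eq_one_of_norm_eq_one hq

section PerturbedZeros

variable {e : ℕ} (d : ℕ) (q u : Fin e → ℂ)

noncomputable def perturbedZeros (t : ℝ) (k : Fin e) : ℂ :=
  if (k : ℕ) < d then q k else boundaryApproach (q k) (u k) t

variable {d q u}

theorem norm_perturbedZeros_lt_one (hqin : ∀ k : Fin e, (k : ℕ) < d → ‖q k‖ < 1)
    (hqbd : ∀ k : Fin e, d ≤ (k : ℕ) → ‖q k‖ = 1) (hu : ∀ k, ‖u k‖ = 1)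
    (hu_re : ∀ k, 0 ≤ (u k).re) {t : ℝ} (ht₀ : 0 < t) (ht₁ : t < 1) (k : Fin e) :
    ‖perturbedZeros d q u t k‖ < 1 := by
  unfold perturbedZeros
  split_ifs with hk
  · exact hqin k hk
  · exact norm_boundaryApproach_lt_one (hqbd k (not_lt.mp hk)) (hu k) (hu_re k) ht₀ ht₁

theorem tendsto_perturbedZeros (k : Fin e) :
    Tendsto (fun t => perturbedZeros d q u t k) (𝓝 0) (𝓝 (q k)) := by
  unfold perturbedZeros
  split_ifs
  · exact tendsto_const_nhds
  · exact tendsto_boundaryApproach (q k) (u k)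

theorem tendstoUniformlyOn_blaschke_perturbedZeros {ι : Type*} {l : Filter ι} {K : Set ℂ}
    (hK : IsCompact K) (m : ℕ) (hqbd : ∀ k : Fin e, d ≤ (k : ℕ) → ‖q k‖ = 1)
    (hu : ∀ k, ‖u k‖ = 1) (hKbd : ∀ k : Fin e, d ≤ (k : ℕ) → q k ∉ K)
    (hKin : ∀ z ∈ K, ∀ k : Fin e, (k : ℕ) < d → 1 - conj (q k) * z ≠ 0)
    {t : ι → ℝ} (ht : Tendsto t l (𝓝[≠] 0)) :
    TendstoUniformlyOn (fun n => blaschke m (perturbedZeros d q u (t n)))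
      (fun z => z ^ m * ∏ k : Fin e, if (k : ℕ) < d then blaschkeFactor (q k) z else
        if q k = 1 then -conj (u k) ^ 2 else 1) l K := by
  refine tendstoUniformlyOn_blaschke hK m (fun k => ?_) (fun k => ?_)
  · by_cases hk : (k : ℕ) < d
    · simpa only [perturbedZeros, hk, ↓reduceIte] using tendstoUniformlyOn_const_family _ K
    · simpa only [perturbedZeros, hk, ↓reduceIte] using
        tendstoUniformlyOn_blaschkeFactor_boundaryApproach hK (hqbd k (not_lt.mp hk)) (hu k)
          (hKbd k (not_lt.mp hk)) ht
  · by_cases hk : (k : ℕ) < d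
    · simp only [hk, ↓reduceIte]
      exact continuousOn_const.mul
        (ContinuousOn.div (by fun_prop) (by fun_prop) fun z hz => hKin z hz k hk)
    · simp only [hk, ↓reduceIte]
      exact continuousOn_const

end PerturbedZeros

theorem stmt3_general (m e d₁ : ℕ) (hd : d₁ < e)
    (q : Fin e → ℂ)
    (hqin : ∀ k : Fin e, (k : ℕ) < d₁ → ‖q k‖ < 1)
    (hqbd : ∀ k : Fin e, d₁ ≤ (k : ℕ) → ‖q k‖ = 1)
    (hq1 : ∃ k : Fin e, d₁ ≤ (k : ℕ) ∧ q k = 1)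
    (ζ : ℂ) (hζ : ‖ζ‖ = 1) :
    ∃ A : ℕ → Fin e → ℂ, (∀ n k, ‖A n k‖ < 1) ∧
      (∀ k, Tendsto (fun n => A n k) atTop (nhds (q k))) ∧
      ∀ K : Set ℂ, IsCompact K →
        (∀ z ∈ K, ∀ k : Fin e, d₁ ≤ (k : ℕ) → z ≠ q k) →
        (∀ z ∈ K, ∀ k : Fin e, (k : ℕ) < d₁ → 1 - (starRingEnd ℂ) (q k) * z ≠ 0) →
        TendstoUniformlyOn (fun n => blaschke m (A n))
          (fun z => ζ * blaschke m (fun k : Fin d₁ => q (Fin.castLE hd.le k)) z) atTop K := by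
  classical
  obtain ⟨k₀, hk₀d, hk₀q⟩ := hq1
  choose u hu hu_re hu_sq using fun k : Fin e =>
    Complex.exists_norm_eq_one_re_nonneg_neg_conj_sq_eq (c := if k = k₀ then ζ else 1)
      (by split_ifs <;> simp [hζ])
  obtain ⟨t, -, ht_mem, ht_lim⟩ := exists_seq_strictAnti_tendsto' (zero_lt_one' ℝ)
  have ht : Tendsto t atTop (𝓝[≠] 0) := tendsto_nhdsWithin_of_tendsto_nhds_of_eventually_within _
    ht_lim (Eventually.of_forall fun n => (ht_mem n).1.ne')
  refine ⟨fun n => perturbedZeros d₁ q u (t n),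
    fun n => norm_perturbedZeros_lt_one hqin hqbd hu hu_re (ht_mem n).1 (ht_mem n).2,
    fun k => (tendsto_perturbedZeros k).comp ht_lim, fun K hK hKbd hKin => ?_⟩
  refine (tendstoUniformlyOn_blaschke_perturbedZeros hK m hqbd hu
    (fun k hk hqK => hKbd _ hqK k hk rfl) hKin ht).congr_right fun z _ => ?_
  have hboundary (k : Fin e) :
      (if q k = 1 then -conj (u k) ^ 2 else 1) = if k = k₀ then ζ else 1 := by
    by_cases h : q k = 1
    · rw [if_pos h, hu_sq k]
    · rw [if_neg h, if_neg fun hk : k = k₀ => h (hk ▸ hk₀q)]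
  simp only [hboundary]
  rw [pow_mul_prod_ite_eq_mul_blaschke m hd.le, Finset.prod_ite_eq', if_pos (by simpa using hk₀d)]

/-- Fix `m ≥ 1`, `e ≥ 1`, `0 ≤ d₁ ≤ e − 1`, points `a_1,…,a_{d₁} ∈ 𝔻`
(encoded as `q k` for `k < d₁`) and `q_{d₁+1},…,q_e ∈ ∂𝔻` (encoded as `q k` for `d₁ ≤ k`),
with `q k = 1` for at least one boundary index.  Let `B` be the Blaschke product with
exponent `m` and the interior zeros.  Then for every `ζ` of modulus `1` there exist
sequences in `𝔻` converging to the `q k` such that the corresponding Blaschke products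
converge to `ζ·B` uniformly on every compact set disjoint from the boundary points and
from the poles of `B`. -/
theorem stmt3 (m e d₁ : ℕ) (hm : 1 ≤ m) (he : 1 ≤ e) (hd : d₁ < e)
    (q : Fin e → ℂ)
    (hqin : ∀ k : Fin e, (k : ℕ) < d₁ → ‖q k‖ < 1)
    (hqbd : ∀ k : Fin e, d₁ ≤ (k : ℕ) → ‖q k‖ = 1)
    (hq1 : ∃ k : Fin e, d₁ ≤ (k : ℕ) ∧ q k = 1)
    (ζ : ℂ) (hζ : ‖ζ‖ = 1) :
    ∃ A : ℕ → Fin e → ℂ, (∀ n k, ‖A n k‖ < 1) ∧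
      (∀ k, Tendsto (fun n => A n k) atTop (nhds (q k))) ∧
      ∀ K : Set ℂ, IsCompact K →
        (∀ z ∈ K, ∀ k : Fin e, d₁ ≤ (k : ℕ) → z ≠ q k) →
        (∀ z ∈ K, ∀ k : Fin e, (k : ℕ) < d₁ → 1 - (starRingEnd ℂ) (q k) * z ≠ 0) →
        TendstoUniformlyOn (fun n => blaschke m (A n))
          (fun z => ζ * blaschke m (fun k : Fin d₁ => q (Fin.castLE hd.le k)) z) atTop K :=
  stmt3_general m e d₁ hd q hqin hqbd hq1 ζ hζ
end

section
/- Let 0 < r < R, A = {z ∈ ℂ : r < |z| < R}, and let f_n : A → ℂ be holomorphic functions converging locally uniformly on A to a holomorphic function f : A → ℂ, with sup_n ∫_A |f_n'(z)|² dλ(z) < ∞. Then there exist a subset E ⊆ [0, 2π] of full Lebesgue measure and a strictly increasing sequence of indices (n_k) such that: (a) for every θ ∈ E and every g ∈ {f} ∪ {f_{n_k} : k ≥ 1}, the limits lim_{ρ → R⁻} g(ρ·e^{iθ}) and lim_{ρ → r⁺} g(ρ·e^{iθ}) exist in ℂ; (b) for every θ ∈ E, f_{n_k} converges to f uniformly on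 the radial segment {ρ·e^{iθ} : r < ρ < R} as k → ∞. -/
/-!
Write `radialEnergy r R g θ = ∫ ρ in (r, R), |g'(ρ e^{iθ})|²`. The fundamental theorem of calculus
and Cauchy–Schwarz along the radius give
`|g(x e^{iθ}) - g(y e^{iθ})|² ≤ |x - y| · radialEnergy r R g θ`, so in a direction of finite radial
energy the radial function is uniformly continuous and has limits at both ends. Polar coordinates
bound `r · ∫ radialEnergy dθ` by the Dirichlet integral, and Fatou's lemma bounds the Dirichlet
integral of the limit. Choose `nk` so that `f (nk k)` is `2⁻ᵏ`-close to `flim` on the closed annulus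
`r + δₖ ≤ |z| ≤ R - δₖ`, with `δₖ ≤ 8⁻ᵏ`. Then
`T = radialEnergy flim + ∑ₖ 2⁻ᵏ radialEnergy (f (nk k))` is integrable in `θ`, hence finite almost
everywhere, and in a direction where it is finite the bound `δₖ · 2ᵏ T ≤ 4⁻ᵏ T` on the two
boundary layers of width `δₖ` yields uniform convergence along the whole radius.
-/

open Filter MeasureTheory Set Topology Metric Complex
open scoped ENNReal NNReal Real

section RealVariable

variable {E : Type*} [NormedAddCommGroup E] [NormedSpace ℝ E] [CompleteSpace E]

theorem enorm_sub_sq_le_mul_lintegral_enorm_deriv_sq {u u' : ℝ → E} {a b : ℝ} (hab : a ≤ b)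
    (hu : ∀ x ∈ Icc a b, HasDerivAt u (u' x) x)
    (hu' : AEStronglyMeasurable u' (volume.restrict (Ioc a b))) :
    ‖u b - u a‖ₑ ^ 2 ≤ ENNReal.ofReal (b - a) * ∫⁻ x in Ioc a b, ‖u' x‖ₑ ^ 2 := by
  set I := ∫⁻ x in Ioc a b, ‖u' x‖ₑ ^ 2
  rcases hab.eq_or_lt with rfl | hlt
  · simp
  by_cases hI : I = ⊤
  · rw [hI, ENNReal.mul_top (by simpa using hlt)]
    exact le_top
  -- Cauchy–Schwarz against the constant function `1`
  have hCS : ∫⁻ x in Ioc a b, ‖u' x‖ₑ ≤ I ^ (2⁻¹ : ℝ) * ENNReal.ofReal (b - a) ^ (2⁻¹ : ℝ) := by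
    have := ENNReal.lintegral_mul_norm_pow_le (μ := volume.restrict (Ioc a b))
      (g := fun _ => 1) (hu'.enorm.pow_const 2) aemeasurable_const (p := 2⁻¹) (q := 2⁻¹)
      (by norm_num) (by norm_num) (by norm_num)
    have hsqrt (z : ℝ≥0∞) : (z ^ 2) ^ (2⁻¹ : ℝ) = z := by
      simpa using ENNReal.pow_rpow_inv_natCast two_ne_zero z
    simpa [hsqrt, Real.volume_Ioc] using this
  have hint : IntegrableOn u' (Ioc a b) :=
    ⟨hu', hCS.trans_lt (ENNReal.mul_lt_top (ENNReal.rpow_lt_top_of_nonneg (by norm_num) hI)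
      (ENNReal.rpow_lt_top_of_nonneg (by norm_num) ENNReal.ofReal_ne_top))⟩
  have hFTC : ∫ x in Ioc a b, u' x = u b - u a := by
    rw [← intervalIntegral.integral_of_le hab]
    exact intervalIntegral.integral_eq_sub_of_hasDerivAt (by rwa [uIcc_of_le hab])
      ((intervalIntegrable_iff_integrableOn_Ioc_of_le hab).2 hint)
  calc ‖u b - u a‖ₑ ^ 2 ≤ (∫⁻ x in Ioc a b, ‖u' x‖ₑ) ^ 2 := by
        rw [← hFTC]; gcongr; exact enorm_integral_le_lintegral_enorm _
    _ ≤ (I ^ (2⁻¹ : ℝ) * ENNReal.ofReal (b - a) ^ (2⁻¹ : ℝ)) ^ 2 := by gcongr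
    _ = ENNReal.ofReal (b - a) * I := by
        have hsq (z : ℝ≥0∞) : (z ^ (2⁻¹ : ℝ)) ^ 2 = z := by
          simpa using ENNReal.rpow_inv_natCast_pow two_ne_zero z
        rw [mul_pow, hsq, hsq, mul_comm]

theorem dist_sq_le_lintegral_enorm_deriv_sq_mul_dist {u u' : ℝ → E} {a b : ℝ}
    (hu : ∀ x ∈ Ioo a b, HasDerivAt u (u' x) x)
    (hu' : AEStronglyMeasurable u' (volume.restrict (Ioo a b)))
    (hfin : ∫⁻ t in Ioo a b, ‖u' t‖ₑ ^ 2 ≠ ⊤) {x y : ℝ} (hx : x ∈ Ioo a b) (hy : y ∈ Ioo a b) :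
    dist (u x) (u y) ^ 2 ≤ (∫⁻ t in Ioo a b, ‖u' t‖ₑ ^ 2).toReal * dist x y := by
  wlog hxy : x ≤ y generalizing x y
  · rw [dist_comm, dist_comm x]
    exact this hy hx (le_of_not_ge hxy)
  have hsub : Ioc x y ⊆ Ioo a b := Ioc_subset_Ioo hx.1.le hy.2
  have h := enorm_sub_sq_le_mul_lintegral_enorm_deriv_sq hxy
    (fun t ht => hu t ⟨hx.1.trans_le ht.1, ht.2.trans_lt hy.2⟩) (hu'.mono_set hsub)
  have hmono : ∫⁻ t in Ioc x y, ‖u' t‖ₑ ^ 2 ≤ ∫⁻ t in Ioo a b, ‖u' t‖ₑ ^ 2 :=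
    lintegral_mono_set hsub
  have := ENNReal.toReal_mono (ENNReal.mul_ne_top ENNReal.ofReal_ne_top hfin)
    (h.trans (by gcongr))
  rw [ENNReal.toReal_pow, ENNReal.toReal_mul, ENNReal.toReal_ofReal (sub_nonneg.2 hxy),
    toReal_enorm] at this
  rwa [dist_comm, dist_eq_norm, Real.dist_eq, abs_sub_comm, abs_of_nonneg (sub_nonneg.2 hxy),
    mul_comm]

end RealVariable

theorem uniformContinuousOn_of_dist_sq_le_mul_dist {α β : Type*} [PseudoMetricSpace α]
    [PseudoMetricSpace β] {u : α → β} {s : Set α} {C : ℝ}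
    (h : ∀ x ∈ s, ∀ y ∈ s, dist (u x) (u y) ^ 2 ≤ C * dist x y) : UniformContinuousOn u s := by
  rw [Metric.uniformContinuousOn_iff]
  intro ε hε
  refine ⟨ε ^ 2 / (|C| + 1), by positivity, fun x hx y hy hxy => ?_⟩
  refine lt_of_pow_lt_pow_left₀ 2 hε.le ((h x hx y hy).trans_lt ?_)
  calc C * dist x y ≤ (|C| + 1) * dist x y := by gcongr; exact (le_abs_self C).trans (by linarith)
    _ < (|C| + 1) * (ε ^ 2 / (|C| + 1)) := by gcongr
    _ = ε ^ 2 := by field_simp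

theorem UniformContinuousOn.exists_tendsto {α β : Type*} [UniformSpace α] [UniformSpace β]
    [CompleteSpace β] {u : α → β} {s : Set α} (hu : UniformContinuousOn u s) {l : Filter α}
    (hl : Cauchy l) (hs : s ∈ l) : ∃ c, Tendsto u l (𝓝 c) := by
  have : l.NeBot := hl.1
  refine cauchy_map_iff_exists_tendsto.1 ⟨hl.1.map u, ?_⟩
  rw [prod_map_map_eq]
  exact (map_mono (le_inf hl.2 (le_principal_iff.2 (prod_mem_prod hs hs)))).trans hu

theorem dist_le_three_mul_of_dist_le_on_Icc {β : Type*} [PseudoMetricSpace β] {u v : ℝ → β}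
    {a b δ ε : ℝ} (hδ : 0 < δ) (hδab : δ ≤ (b - a) / 2)
    (hu : ∀ x ∈ Ioo a b, ∀ y ∈ Ioo a b, dist x y ≤ δ → dist (u x) (u y) ≤ ε)
    (hv : ∀ x ∈ Ioo a b, ∀ y ∈ Ioo a b, dist x y ≤ δ → dist (v x) (v y) ≤ ε)
    (huv : ∀ y ∈ Icc (a + δ) (b - δ), dist (u y) (v y) ≤ ε) {x : ℝ} (hx : x ∈ Ioo a b) :
    dist (u x) (v x) ≤ 3 * ε := by
  obtain ⟨y, hy, hxy⟩ : ∃ y ∈ Icc (a + δ) (b - δ), dist x y ≤ δ := by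
    rcases le_total x (a + δ) with h1 | h1
    · refine ⟨a + δ, ⟨le_rfl, by linarith⟩, ?_⟩
      rw [Real.dist_eq, abs_le]; constructor <;> linarith [hx.1]
    rcases le_total x (b - δ) with h2 | h2
    · exact ⟨x, ⟨h1, h2⟩, by simp [hδ.le]⟩
    · refine ⟨b - δ, ⟨by linarith, le_rfl⟩, ?_⟩
      rw [Real.dist_eq, abs_le]; constructor <;> linarith [hx.2]
  have hyI : y ∈ Ioo a b := ⟨by linarith [hy.1], by linarith [hy.2]⟩
  calc dist (u x) (v x) ≤ dist (u x) (u y) + dist (u y) (v y) + dist (v y) (v x) :=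
        dist_triangle4 _ _ _ _
    _ ≤ ε + ε + ε := by
        gcongr
        · exact hu x hx y hyI hxy
        · exact huv y hy
        · exact hv y hyI x hx (dist_comm x y ▸ hxy)
    _ = 3 * ε := by ring

theorem tendstoUniformlyOn_Ioo_of_dist_sq_le {β : Type*} [PseudoMetricSpace β]
    {u : ℕ → ℝ → β} {v : ℝ → β} {a b C : ℝ} {δ : ℕ → ℝ} (hC : 0 ≤ C)
    (hδ : ∀ k, 0 < δ k) (hδab : ∀ k, δ k ≤ (b - a) / 2) (hδ8 : ∀ k, δ k ≤ 8⁻¹ ^ k)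
    (hu : ∀ k, ∀ x ∈ Ioo a b, ∀ y ∈ Ioo a b, dist (u k x) (u k y) ^ 2 ≤ 2 ^ k * C * dist x y)
    (hv : ∀ x ∈ Ioo a b, ∀ y ∈ Ioo a b, dist (v x) (v y) ^ 2 ≤ C * dist x y)
    (huv : ∀ k, ∀ x ∈ Icc (a + δ k) (b - δ k), dist (u k x) (v x) ≤ 2⁻¹ ^ k) :
    TendstoUniformlyOn u v atTop (Ioo a b) := by
  set ε : ℕ → ℝ := fun k => 2⁻¹ ^ k * (√C + 1)
  have hmod : ∀ k, ∀ w : ℝ → β,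
      (∀ x ∈ Ioo a b, ∀ y ∈ Ioo a b, dist (w x) (w y) ^ 2 ≤ 2 ^ k * C * dist x y) →
      ∀ x ∈ Ioo a b, ∀ y ∈ Ioo a b, dist x y ≤ δ k → dist (w x) (w y) ≤ ε k := by
    intro k w hw x hx y hy hxy
    refine le_of_pow_le_pow_left₀ two_ne_zero (by positivity) ((hw x hx y hy).trans ?_)
    calc 2 ^ k * C * dist x y ≤ 2 ^ k * C * 8⁻¹ ^ k := by gcongr; exact hxy.trans (hδ8 k)
      _ = (2⁻¹ ^ k * √C) ^ 2 := by
          have h48 : (2 : ℝ) ^ k * 8⁻¹ ^ k = (2⁻¹ ^ k) ^ 2 := by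
            rw [← mul_pow, ← pow_mul, mul_comm k, pow_mul]; norm_num
          rw [mul_pow, Real.sq_sqrt hC, ← h48]; ring
      _ ≤ (2⁻¹ ^ k * (√C + 1)) ^ 2 := by gcongr; linarith
  have hv' : ∀ k, ∀ x ∈ Ioo a b, ∀ y ∈ Ioo a b, dist (v x) (v y) ^ 2 ≤ 2 ^ k * C * dist x y :=
    fun k x hx y hy => (hv x hx y hy).trans (by
      gcongr; exact le_mul_of_one_le_left hC (one_le_pow₀ one_le_two))
  have hbound : ∀ k, ∀ x ∈ Ioo a b, dist (v x) (u k x) ≤ 3 * ε k := fun k x hx => by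
    rw [dist_comm]
    refine dist_le_three_mul_of_dist_le_on_Icc (hδ k) (hδab k) (hmod k _ (hu k)) (hmod k _ (hv' k))
      (fun y hy => (huv k y hy).trans ?_) hx
    exact le_mul_of_one_le_right (by positivity) (by linarith [Real.sqrt_nonneg C])
  have hε : Tendsto (fun k => 3 * ε k) atTop (𝓝 0) := by
    simpa [ε] using (tendsto_pow_atTop_nhds_zero_of_lt_one (by norm_num : (0:ℝ) ≤ 2⁻¹)
      (by norm_num)).mul_const (√C + 1) |>.const_mul 3
  rw [Metric.tendstoUniformlyOn_iff]
  intro e he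
  filter_upwards [hε.eventually_lt_const he] with k hk x hx
  exact (hbound k x hx).trans_lt hk

theorem Function.Periodic.setLIntegral_Icc_eq_setLIntegral_Ioo {f : ℝ → ℝ≥0∞} {p : ℝ}
    (hf : Function.Periodic f p) (hp : 0 < p) (a b : ℝ) :
    ∫⁻ x in Icc a (a + p), f x = ∫⁻ x in Ioo b (b + p), f x := by
  rw [setLIntegral_congr Ioc_ae_eq_Icc.symm, setLIntegral_congr Ioo_ae_eq_Ioc]
  exact (isAddFundamentalDomain_Ioc hp a).setLIntegral_eq (isAddFundamentalDomain_Ioc hp b) f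
    hf.map_vadd_zmultiples

theorem lintegral_tsum_geometric_mul_le {α : Type*} [MeasurableSpace α] {μ : Measure α}
    {G : ℕ → α → ℝ≥0∞} (hG : ∀ k, AEMeasurable (G k) μ) {M : ℝ≥0∞} (hM : ∀ k, ∫⁻ x, G k x ∂μ ≤ M) :
    ∫⁻ x, ∑' k, 2⁻¹ ^ k * G k x ∂μ ≤ 2 * M := by
  rw [lintegral_tsum fun k => (hG k).const_mul _]
  calc ∑' k, ∫⁻ x, 2⁻¹ ^ k * G k x ∂μ ≤ ∑' k : ℕ, 2⁻¹ ^ k * M := by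
        gcongr with k
        rw [lintegral_const_mul' _ _ (by simp)]
        gcongr
        exact hM k
    _ = 2 * M := by
        rw [ENNReal.tsum_mul_right, ENNReal.tsum_geometric, ENNReal.one_sub_inv_two, inv_inv]

theorem TendstoLocallyUniformlyOn.exists_strictMono_dist_lt {α β : Type*} [TopologicalSpace α]
    [PseudoMetricSpace β] {f : ℕ → α → β} {g : α → β} {U : Set α} {K : ℕ → Set α}
    (hconv : TendstoLocallyUniformlyOn f g atTop U) (hK : ∀ k, IsCompact (K k))
    (hKU : ∀ k, K k ⊆ U) {ε : ℕ → ℝ} (hε : ∀ k, 0 < ε k) :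
    ∃ φ : ℕ → ℕ, StrictMono φ ∧ ∀ k, ∀ z ∈ K k, dist (g z) (f (φ k) z) < ε k :=
  extraction_forall_of_eventually fun k => Metric.tendstoUniformlyOn_iff.1
    ((tendstoLocallyUniformlyOn_iff_tendstoUniformlyOn_of_compact (hK k)).1 (hconv.mono (hKU k)))
    _ (hε k)

theorem TendstoUniformlyOn.image_of_comp {α β γ : Type*} [UniformSpace β] {F : ℕ → α → β}
    {f : α → β} {φ : γ → α} {s : Set γ}
    (h : TendstoUniformlyOn (fun n => F n ∘ φ) (f ∘ φ) atTop s) :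
    TendstoUniformlyOn F f atTop (φ '' s) := by
  intro u hu
  filter_upwards [h u hu] with n hn
  rintro _ ⟨x, hx, rfl⟩
  exact hn x hx

theorem le_two_pow_mul_add_tsum (a : ℝ≥0∞) (b : ℕ → ℝ≥0∞) (k : ℕ) :
    b k ≤ 2 ^ k * (a + ∑' j, 2⁻¹ ^ j * b j) :=
  calc b k = 2 ^ k * (2⁻¹ ^ k * b k) := by
        rw [← mul_assoc, ← mul_pow, ENNReal.mul_inv_cancel two_ne_zero ENNReal.ofNat_ne_top,
          one_pow, one_mul]
    _ ≤ 2 ^ k * (a + ∑' j, 2⁻¹ ^ j * b j) := by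
        gcongr
        exact (ENNReal.le_tsum k).trans le_add_self

theorem setLIntegral_enorm_deriv_sq_le_iSup {U : Set ℂ} (hU : IsOpen U) {f : ℕ → ℂ → ℂ}
    {g : ℂ → ℂ} (hf : ∀ n, DifferentiableOn ℂ (f n) U)
    (hconv : TendstoLocallyUniformlyOn f g atTop U) :
    ∫⁻ z in U, ‖deriv g z‖ₑ ^ 2 ≤ ⨆ n, ∫⁻ z in U, ‖deriv (f n) z‖ₑ ^ 2 := by
  have hderiv := hconv.deriv (Eventually.of_forall hf) hU
  calc ∫⁻ z in U, ‖deriv g z‖ₑ ^ 2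
      = ∫⁻ z in U, liminf (fun n => ‖deriv (f n) z‖ₑ ^ 2) atTop := by
        refine setLIntegral_congr_fun hU.measurableSet fun z hz => ?_
        have hsq := ((ENNReal.continuous_pow 2).comp continuous_enorm).tendsto (deriv g z)
        exact (hsq.comp (hderiv.tendsto_at hz)).liminf_eq.symm
    _ ≤ liminf (fun n => ∫⁻ z in U, ‖deriv (f n) z‖ₑ ^ 2) atTop :=
        lintegral_liminf_le fun n => (measurable_deriv (f n)).enorm.pow_const 2
    _ ≤ ⨆ n, ∫⁻ z in U, ‖deriv (f n) z‖ₑ ^ 2 :=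
        (liminf_le_limsup).trans limsup_le_iSup

def annulus (r R : ℝ) : Set ℂ := {z : ℂ | r < ‖z‖ ∧ ‖z‖ < R}

theorem isOpen_annulus (r R : ℝ) : IsOpen (annulus r R) :=
  (isOpen_lt continuous_const continuous_norm).inter (isOpen_lt continuous_norm continuous_const)

theorem norm_ofReal_mul_exp_mul_I {ρ : ℝ} (hρ : 0 ≤ ρ) (θ : ℝ) : ‖(ρ : ℂ) * exp (θ * I)‖ = ρ := by
  rw [norm_mul, norm_exp_ofReal_mul_I, mul_one, Complex.norm_of_nonneg hρ]

theorem ofReal_mul_exp_mem_annulus {r R ρ : ℝ} (hr : 0 ≤ r) (hρ : ρ ∈ Ioo r R) (θ : ℝ) :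
    (ρ : ℂ) * exp (θ * I) ∈ annulus r R := by
  rw [annulus, mem_ofPred_eq, norm_ofReal_mul_exp_mul_I (hr.trans hρ.1.le)]
  exact hρ

theorem closedBall_sdiff_ball_subset_annulus {r R δ : ℝ} (hδ : 0 < δ) :
    closedBall 0 (R - δ) \ ball 0 (r + δ) ⊆ annulus r R := fun z hz => by
  simp only [Set.mem_sdiff, mem_closedBall_zero_iff, mem_ball_zero_iff, not_lt] at hz
  exact ⟨by linarith [hz.2], by linarith [hz.1]⟩

theorem hasDerivAt_comp_ofReal_mul {g : ℂ → ℂ} {c : ℂ} {t : ℝ}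
    (hg : DifferentiableAt ℂ g (t * c)) :
    HasDerivAt (fun s : ℝ => g (s * c)) (c * deriv g (t * c)) t := by
  have := hg.hasDerivAt.comp (t : ℂ) (hasDerivAt_mul_const c)
  rw [mul_comm] at this
  exact this.comp_ofReal

noncomputable def radialEnergy (r R : ℝ) (g : ℂ → ℂ) (θ : ℝ) : ℝ≥0∞ :=
  ∫⁻ ρ in Ioo r R, ‖deriv g (ρ * exp (θ * I))‖ₑ ^ 2

theorem measurable_radialEnergy (r R : ℝ) (g : ℂ → ℂ) : Measurable (radialEnergy r R g) := by
  have : Measurable fun p : ℝ × ℝ => ‖deriv g (p.2 * exp (p.1 * I))‖ₑ ^ 2 :=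
    ((measurable_deriv g).comp (by fun_prop)).enorm.pow_const 2
  exact this.lintegral_prod_right'

theorem periodic_radialEnergy (r R : ℝ) (g : ℂ → ℂ) :
    Function.Periodic (radialEnergy r R g) (2 * π) := fun θ => by
  simp only [radialEnergy, ofReal_add, ofReal_mul, ofReal_ofNat, add_mul, exp_add, exp_two_pi_mul_I,
    mul_one]

section RadialEnergy

variable {r R : ℝ}

theorem dist_sq_le_radialEnergy_mul_dist {g : ℂ → ℂ} (hr : 0 ≤ r)
    (hg : DifferentiableOn ℂ g (annulus r R))
    {θ : ℝ} (hE : radialEnergy r R g θ ≠ ⊤) {x y : ℝ} (hx : x ∈ Ioo r R) (hy : y ∈ Ioo r R) :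
    dist (g (x * exp (θ * I))) (g (y * exp (θ * I))) ^ 2
      ≤ (radialEnergy r R g θ).toReal * dist x y := by
  have henergy : ∫⁻ ρ in Ioo r R, ‖exp (θ * I) * deriv g (ρ * exp (θ * I))‖ₑ ^ 2
      = radialEnergy r R g θ := by
    simp only [enorm_mul, enorm_exp_ofReal_mul_I, one_mul, radialEnergy]
  rw [← henergy] at hE ⊢
  refine dist_sq_le_lintegral_enorm_deriv_sq_mul_dist (u := fun ρ : ℝ => g (ρ * exp (θ * I)))
    (fun ρ hρ => hasDerivAt_comp_ofReal_mul ((hg _ (ofReal_mul_exp_mem_annulus hr hρ θ))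
      |>.differentiableAt ((isOpen_annulus r R).mem_nhds (ofReal_mul_exp_mem_annulus hr hρ θ))))
    ?_ hE hx hy
  exact (((measurable_deriv g).comp (by fun_prop)).const_mul _).aestronglyMeasurable

theorem exists_tendsto_radial {g : ℂ → ℂ} (hr : 0 ≤ r) (hrR : r < R)
    (hg : DifferentiableOn ℂ g (annulus r R))
    {θ : ℝ} (hE : radialEnergy r R g θ ≠ ⊤) :
    (∃ c, Tendsto (fun ρ : ℝ => g (ρ * exp (θ * I))) (𝓝[<] R) (𝓝 c)) ∧
      ∃ c, Tendsto (fun ρ : ℝ => g (ρ * exp (θ * I))) (𝓝[>] r) (𝓝 c) := by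
  have hunif := uniformContinuousOn_of_dist_sq_le_mul_dist
    fun x hx y hy => dist_sq_le_radialEnergy_mul_dist hr hg hE hx hy
  exact ⟨hunif.exists_tendsto (cauchy_nhds.mono nhdsWithin_le_nhds) (Ioo_mem_nhdsLT hrR),
    hunif.exists_tendsto (cauchy_nhds.mono nhdsWithin_le_nhds) (Ioo_mem_nhdsGT hrR)⟩

theorem ofReal_mul_lintegral_polar_le (hr : 0 ≤ r) {F : ℂ → ℝ≥0∞} (hF : Measurable F) :
    ENNReal.ofReal r * ∫⁻ θ in Ioo (-π) π, ∫⁻ ρ in Ioo r R, F (ρ * exp (θ * I))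
      ≤ ∫⁻ z in annulus r R, F z := by
  have hpolar (p : ℝ × ℝ) : Complex.polarCoord.symm p = p.1 * exp (p.2 * I) := by
    rw [Complex.polarCoord_symm_apply, exp_mul_I, ← ofReal_cos, ← ofReal_sin]
  have hmeas : Measurable fun p : ℝ × ℝ => F (p.1 * exp (p.2 * I)) := hF.comp (by fun_prop)
  have hsub : Ioo r R ×ˢ Ioo (-π) π ⊆ polarCoord.target := by
    rw [polarCoord_target]
    exact prod_mono (Ioo_subset_Ioi_self.trans (Ioi_subset_Ioi hr)) subset_rfl
  calc ENNReal.ofReal r * ∫⁻ θ in Ioo (-π) π, ∫⁻ ρ in Ioo r R, F (ρ * exp (θ * I))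
      = ∫⁻ p in Ioo r R ×ˢ Ioo (-π) π, ENNReal.ofReal r * F (p.1 * exp (p.2 * I)) := by
        simp_rw [Measure.volume_eq_prod, setLIntegral_prod_symm _ (hmeas.const_mul _).aemeasurable,
          lintegral_const_mul' _ _ ENNReal.ofReal_ne_top]
    _ ≤ ∫⁻ p in polarCoord.target,
          ENNReal.ofReal p.1 • (annulus r R).indicator F (Complex.polarCoord.symm p) := by
        refine (setLIntegral_mono' (measurableSet_Ioo.prod measurableSet_Ioo) fun p hp => ?_).trans
          (lintegral_mono_set hsub)
        rw [hpolar, indicator_of_mem (ofReal_mul_exp_mem_annulus hr hp.1 _), smul_eq_mul]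
        gcongr
        exact hp.1.1.le
    _ = ∫⁻ z in annulus r R, F z := by
        rw [Complex.lintegral_comp_polarCoord_symm,
          lintegral_indicator (isOpen_annulus r R).measurableSet]

theorem lintegral_radialEnergy_le (hr : 0 < r) (g : ℂ → ℂ) :
    ∫⁻ θ in Ioo (-π) π, radialEnergy r R g θ
      ≤ (ENNReal.ofReal r)⁻¹ * ∫⁻ z in annulus r R, ‖deriv g z‖ₑ ^ 2 :=
  (ENNReal.mul_le_iff_le_inv (by simpa using hr) ENNReal.ofReal_ne_top).1
    (ofReal_mul_lintegral_polar_le hr.le ((measurable_deriv g).enorm.pow_const 2))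

theorem ae_radialEnergy_add_tsum_lt_top (hr : 0 < r) {f : ℕ → ℂ → ℂ} {g : ℂ → ℂ}
    (hf : ∀ n, DifferentiableOn ℂ (f n) (annulus r R))
    (hconv : TendstoLocallyUniformlyOn f g atTop (annulus r R))
    (hbound : (⨆ n, ∫⁻ z in annulus r R, ‖deriv (f n) z‖ₑ ^ 2) < ⊤) (φ : ℕ → ℕ) :
    ∀ᵐ θ ∂volume.restrict (Icc 0 (2 * π)),
      radialEnergy r R g θ + ∑' k, 2⁻¹ ^ k * radialEnergy r R (f (φ k)) θ < ⊤ := by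
  set M := (ENNReal.ofReal r)⁻¹ * ⨆ n, ∫⁻ z in annulus r R, ‖deriv (f n) z‖ₑ ^ 2
  have hM : M ≠ ⊤ := ENNReal.mul_ne_top (by simpa using hr) hbound.ne
  have hg : ∫⁻ θ in Ioo (-π) π, radialEnergy r R g θ ≤ M :=
    (lintegral_radialEnergy_le hr g).trans
      (mul_le_mul_right (setLIntegral_enorm_deriv_sq_le_iSup (isOpen_annulus r R) hf hconv) _)
  have hfφ : ∀ k, ∫⁻ θ in Ioo (-π) π, radialEnergy r R (f (φ k)) θ ≤ M := fun k =>
    (lintegral_radialEnergy_le hr _).trans (mul_le_mul_right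
      (le_iSup (fun n => ∫⁻ z in annulus r R, ‖deriv (f n) z‖ₑ ^ 2) (φ k)) _)
  have hmeas := measurable_radialEnergy r R
  have hperiodic : Function.Periodic
      (fun θ => radialEnergy r R g θ + ∑' k, 2⁻¹ ^ k * radialEnergy r R (f (φ k)) θ) (2 * π) :=
    fun θ => by simp only [periodic_radialEnergy r R _ θ]
  refine ae_lt_top ((hmeas g).add (Measurable.tsum fun k => (hmeas _).const_mul _)) ?_
  rw [← zero_add (2 * π), hperiodic.setLIntegral_Icc_eq_setLIntegral_Ioo Real.two_pi_pos 0 (-π),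
    show -π + 2 * π = π by ring, lintegral_add_left (hmeas g)]
  exact (ENNReal.add_lt_top.2 ⟨hg.trans_lt hM.lt_top,
    (lintegral_tsum_geometric_mul_le (fun k => (hmeas _).aemeasurable) hfφ).trans_lt
      (ENNReal.mul_lt_top (by simp) hM.lt_top)⟩).ne

theorem tendstoUniformlyOn_radius (hr : 0 ≤ r) {f : ℕ → ℂ → ℂ} {g : ℂ → ℂ}
    (hf : ∀ k, DifferentiableOn ℂ (f k) (annulus r R)) (hg : DifferentiableOn ℂ g (annulus r R))
    {δ : ℕ → ℝ} (hδ : ∀ k, 0 < δ k) (hδR : ∀ k, δ k ≤ (R - r) / 2) (hδ8 : ∀ k, δ k ≤ 8⁻¹ ^ k)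
    (hclose : ∀ k, ∀ z ∈ closedBall 0 (R - δ k) \ ball 0 (r + δ k), dist (g z) (f k z) < 2⁻¹ ^ k)
    {θ : ℝ} {C : ℝ≥0∞} (hC : C ≠ ⊤) (hEf : ∀ k, radialEnergy r R (f k) θ ≤ 2 ^ k * C)
    (hEg : radialEnergy r R g θ ≤ C) :
    TendstoUniformlyOn f g atTop ((fun ρ : ℝ => (ρ : ℂ) * exp (θ * I)) '' Ioo r R) := by
  have hC2 : ∀ k : ℕ, 2 ^ k * C ≠ ⊤ := fun k => ENNReal.mul_ne_top (by simp) hC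
  refine TendstoUniformlyOn.image_of_comp (tendstoUniformlyOn_Ioo_of_dist_sq_le
    (C := C.toReal) ENNReal.toReal_nonneg hδ hδR hδ8 (fun k x hx y hy => ?_) (fun x hx y hy => ?_)
    fun k x hx => ?_)
  · refine (dist_sq_le_radialEnergy_mul_dist hr (hf k) (ne_top_of_le_ne_top (hC2 k) (hEf k))
      hx hy).trans ?_
    gcongr
    simpa using ENNReal.toReal_mono (hC2 k) (hEf k)
  · exact (dist_sq_le_radialEnergy_mul_dist hr hg (ne_top_of_le_ne_top hC hEg) hx hy).trans
      (by gcongr)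
  · have hx0 : 0 ≤ x := by linarith [hx.1, hδ k]
    rw [dist_comm]
    refine (hclose k _ ⟨?_, ?_⟩).le
    · rw [mem_closedBall_zero_iff, norm_ofReal_mul_exp_mul_I hx0]; exact hx.2
    · rw [mem_ball_zero_iff, norm_ofReal_mul_exp_mul_I hx0, not_lt]; exact hx.1

end RadialEnergy

/-- Let `0 < r < R`, `A = {r < |z| < R}`, and let `f n : A → ℂ` be holomorphic
functions converging locally uniformly on `A` to a holomorphic `f`, with uniformly bounded
`L²`-derivatives. Then there is a full measure set `E ⊆ [0,2π]` and a strictly increasing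
sequence of indices `(n k)` such that:
(a) for every `θ ∈ E` and every `g ∈ {f} ∪ {f (n k)}`, the radial limits of `g` at both
    ends of the radius in direction `θ` exist;
(b) for every `θ ∈ E`, `f (n k) → f` uniformly on the open radial segment in direction `θ`. -/
theorem stmt7 (r R : ℝ) (hr : 0 < r) (hrR : r < R)
    (f : ℕ → ℂ → ℂ) (flim : ℂ → ℂ)
    (hf : ∀ n, DifferentiableOn ℂ (f n) {z : ℂ | r < ‖z‖ ∧ ‖z‖ < R})
    (hflim : DifferentiableOn ℂ flim {z : ℂ | r < ‖z‖ ∧ ‖z‖ < R})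
    (hconv : TendstoLocallyUniformlyOn f flim atTop {z : ℂ | r < ‖z‖ ∧ ‖z‖ < R})
    (hbound : (⨆ n, ∫⁻ z in {z : ℂ | r < ‖z‖ ∧ ‖z‖ < R},
        (‖deriv (f n) z‖₊ : ℝ≥0∞) ^ 2) < ⊤) :
    ∃ E ⊆ Set.Icc (0 : ℝ) (2 * Real.pi),
      volume (Set.Icc (0 : ℝ) (2 * Real.pi) \ E) = 0 ∧
      ∃ nk : ℕ → ℕ, StrictMono nk ∧
        (∀ θ ∈ E, ∀ g : ℂ → ℂ, (g = flim ∨ ∃ k : ℕ, g = f (nk k)) →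
          (∃ c : ℂ, Tendsto (fun ρ : ℝ => g ((ρ : ℂ) * Complex.exp ((θ : ℂ) * Complex.I)))
            (nhdsWithin R (Set.Iio R)) (nhds c)) ∧
          (∃ c : ℂ, Tendsto (fun ρ : ℝ => g ((ρ : ℂ) * Complex.exp ((θ : ℂ) * Complex.I)))
            (nhdsWithin r (Set.Ioi r)) (nhds c))) ∧
        (∀ θ ∈ E, TendstoUniformlyOn (fun k => f (nk k)) flim atTop
          {z : ℂ | ∃ ρ : ℝ, r < ρ ∧ ρ < R ∧ z = (ρ : ℂ) * Complex.exp ((θ : ℂ) * Complex.I)}) := by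
  set δ : ℕ → ℝ := fun k => min ((R - r) / 2) (8⁻¹ ^ k)
  have hδ : ∀ k, 0 < δ k := fun k => lt_min (by linarith) (by positivity)
  obtain ⟨nk, hnk, hclose⟩ := hconv.exists_strictMono_dist_lt
    (fun k => (isCompact_closedBall 0 (R - δ k)).diff isOpen_ball)
    (fun k => closedBall_sdiff_ball_subset_annulus (hδ k)) (ε := fun k => 2⁻¹ ^ k)
    (fun k => by positivity)
  set T : ℝ → ℝ≥0∞ := fun θ =>
    radialEnergy r R flim θ + ∑' k, 2⁻¹ ^ k * radialEnergy r R (f (nk k)) θ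
  have hEf (θ : ℝ) (k : ℕ) : radialEnergy r R (f (nk k)) θ ≤ 2 ^ k * T θ :=
    le_two_pow_mul_add_tsum _ _ k
  refine ⟨{θ ∈ Icc 0 (2 * π) | T θ < ⊤}, sep_subset _ _, ?_, nk, hnk, fun θ hθ g hg => ?_,
    fun θ hθ => ?_⟩
  · have hT := (ae_restrict_iff' measurableSet_Icc).1
      (ae_radialEnergy_add_tsum_lt_top hr hf hconv hbound nk)
    rw [ae_iff] at hT
    refine measure_mono_null (fun θ hθ => ?_) hT
    exact fun h => hθ.2 ⟨hθ.1, h hθ.1⟩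
  · rcases hg with rfl | ⟨k, rfl⟩
    · exact exists_tendsto_radial hr.le hrR hflim (ne_top_of_le_ne_top hθ.2.ne le_self_add)
    · exact exists_tendsto_radial hr.le hrR (hf _)
        (ne_top_of_le_ne_top (ENNReal.mul_ne_top (by simp) hθ.2.ne) (hEf θ k))
  · rw [show {z : ℂ | ∃ ρ : ℝ, r < ρ ∧ ρ < R ∧ z = ρ * exp (θ * I)}
        = (fun ρ : ℝ => (ρ : ℂ) * exp (θ * I)) '' Ioo r R by ext z; simp [eq_comm, and_assoc]]
    exact tendstoUniformlyOn_radius hr.le (fun k => hf _) hflim hδ (fun k => min_le_left _ _)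
      (fun k => min_le_right _ _) hclose hθ.2.ne (hEf θ) le_self_add
end

section
/- Let g_n, g : 𝔻 → ℂ be injective holomorphic functions such that g_n → g locally uniformly on 𝔻. Let (z_n), (w_n) be sequences in 𝔻, z₀ ∈ 𝔻 and b ∈ ℂ such that g_n(z_n) → g(z₀) and g_n(w_n) → b. Then b belongs to g(𝔻) if and only if sup_n ρ(z_n, w_n) < 1 (equivalently, the hyperbolic distances between z_n and w_n in 𝔻 are uniformly bounded). -/
/-!
Hurwitz's argument shows that `g n (u n) → g u₀` forces `u n → u₀` when all the maps are
injective: if `u n` stayed outside a small disc around `u₀`, then `g n - g n (u n)` would have no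
zero on that disc, and the minimum modulus principle would contradict the uniform convergence.
Hence if `b = g w₀`, both `z n → z₀` and `w n → w₀` inside the disc, and `ρ(z n, w n)` tends to
`ρ(z₀, w₀) < 1`. Conversely, `ρ(z n, w n) ≤ r < 1` together with `z n → z₀` keeps `w n` in a
compact subdisc, and at a cluster point `w₀` of `w n` locally uniform convergence gives
`b = g w₀`.
-/

open Filter Set Metric Topology ComplexConjugate

noncomputable def pseudoHyperbolicDist (z w : ℂ) : ℝ := ‖z - w‖ / ‖1 - conj w * z‖

section PseudoHyperbolic

variable {z w : ℂ}

lemma sq_norm_one_sub_conj_mul (z w : ℂ) :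
    ‖1 - conj w * z‖ ^ 2 = ‖z - w‖ ^ 2 + (1 - ‖z‖ ^ 2) * (1 - ‖w‖ ^ 2) := by
  simp only [Complex.sq_norm, Complex.normSq_apply, Complex.sub_re, Complex.sub_im,
    Complex.mul_re, Complex.mul_im, Complex.one_re, Complex.one_im, Complex.conj_re,
    Complex.conj_im]
  ring

lemma one_sub_norm_le_norm_one_sub_conj_mul (hw : ‖w‖ ≤ 1) : 1 - ‖z‖ ≤ ‖1 - conj w * z‖ :=
  calc 1 - ‖z‖ ≤ 1 - ‖conj w * z‖ := by
        rw [norm_mul, Complex.norm_conj]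
        gcongr
        exact mul_le_of_le_one_left (norm_nonneg _) hw
    _ ≤ ‖1 - conj w * z‖ := by simpa using norm_sub_norm_le (1 : ℂ) (conj w * z)

lemma norm_one_sub_conj_mul_pos (hz : ‖z‖ < 1) (hw : ‖w‖ ≤ 1) : 0 < ‖1 - conj w * z‖ :=
  (sub_pos.2 hz).trans_le (one_sub_norm_le_norm_one_sub_conj_mul hw)

lemma pseudoHyperbolicDist_nonneg (z w : ℂ) : 0 ≤ pseudoHyperbolicDist z w := by
  unfold pseudoHyperbolicDist
  positivity

lemma pseudoHyperbolicDist_lt_one (hz : ‖z‖ < 1) (hw : ‖w‖ < 1) :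
    pseudoHyperbolicDist z w < 1 := by
  rw [pseudoHyperbolicDist, div_lt_one (norm_one_sub_conj_mul_pos hz hw.le)]
  refine lt_of_pow_lt_pow_left₀ 2 (norm_nonneg _) ?_
  have : 0 < (1 - ‖z‖ ^ 2) * (1 - ‖w‖ ^ 2) := by
    have := norm_nonneg z; have := norm_nonneg w
    apply mul_pos <;> nlinarith
  rw [sq_norm_one_sub_conj_mul]
  linarith

lemma one_sub_pseudoHyperbolicDist_mul_le (hz : ‖z‖ < 1) (hw : ‖w‖ < 1) :
    (1 - pseudoHyperbolicDist z w) * (1 - ‖z‖) ≤ 4 * (1 - ‖w‖) := by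
  set ρ := pseudoHyperbolicDist z w
  set d := ‖1 - conj w * z‖
  have hd : 1 - ‖z‖ ≤ d := one_sub_norm_le_norm_one_sub_conj_mul hw.le
  have hd0 : 0 < d := norm_one_sub_conj_mul_pos hz hw.le
  have hρ0 : 0 ≤ ρ := pseudoHyperbolicDist_nonneg z w
  have hρ1 : ρ < 1 := pseudoHyperbolicDist_lt_one hz hw
  have hnum : ‖z - w‖ = ρ * d := (div_mul_cancel₀ _ hd0.ne').symm
  have hid : (1 - ρ ^ 2) * d ^ 2 = (1 - ‖z‖ ^ 2) * (1 - ‖w‖ ^ 2) := by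
    have := sq_norm_one_sub_conj_mul z w
    rw [hnum] at this
    linarith
  have ha : 0 < 1 - ‖z‖ := sub_pos.2 hz
  have hb : 0 < 1 - ‖w‖ := sub_pos.2 hw
  have hlower : (1 - ρ) * (1 - ‖z‖) ^ 2 ≤ (1 - ρ ^ 2) * d ^ 2 := by
    gcongr
    · nlinarith
    · nlinarith
  have hupper : (1 - ‖z‖ ^ 2) * (1 - ‖w‖ ^ 2) ≤ (1 - ‖z‖) * (4 * (1 - ‖w‖)) := by
    have : (1 + ‖z‖) * (1 + ‖w‖) ≤ 4 := by
      nlinarith [mul_le_mul hz.le hw.le (norm_nonneg w) zero_le_one]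
    nlinarith [mul_pos ha hb]
  refine le_of_mul_le_mul_left ?_ ha
  nlinarith

end PseudoHyperbolic

lemma Filter.Tendsto.pseudoHyperbolicDist {ι : Type*} {l : Filter ι} {z w : ι → ℂ}
    {z₀ w₀ : ℂ} (hz : Tendsto z l (𝓝 z₀)) (hw : Tendsto w l (𝓝 w₀)) (hz₀ : ‖z₀‖ < 1)
    (hw₀ : ‖w₀‖ ≤ 1) :
    Tendsto (fun i => pseudoHyperbolicDist (z i) (w i)) l (𝓝 (pseudoHyperbolicDist z₀ w₀)) :=
  (hz.sub hw).norm.div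
    (tendsto_const_nhds.sub (((Complex.continuous_conj.tendsto w₀).comp hw).mul hz)).norm
    (norm_one_sub_conj_mul_pos hz₀ hw₀).ne'

lemma exists_lt_one_eventually_norm_le_of_tendsto {ι : Type*} {l : Filter ι}
    {z w : ι → ℂ} {z₀ : ℂ} {r : ℝ} (hz : Tendsto z l (𝓝 z₀)) (hz₀ : ‖z₀‖ < 1)
    (hw : ∀ i, ‖w i‖ < 1) (hρ : ∀ i, pseudoHyperbolicDist (z i) (w i) ≤ r) (hr : r < 1) :
    ∃ R < 1, ∀ᶠ i in l, ‖w i‖ ≤ R := by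
  obtain ⟨s, hz₀s, hs⟩ := exists_between hz₀
  have hrs : 0 < (1 - r) * (1 - s) := mul_pos (sub_pos.2 hr) (sub_pos.2 hs)
  refine ⟨1 - (1 - r) * (1 - s) / 4, by linarith, ?_⟩
  filter_upwards [hz.norm.eventually (gt_mem_nhds hz₀s)] with i hzi
  have hzi' : ‖z i‖ < 1 := hzi.trans hs
  have : (1 - r) * (1 - s) ≤ (1 - pseudoHyperbolicDist (z i) (w i)) * (1 - ‖z i‖) := by
    gcongr
    · linarith [pseudoHyperbolicDist_lt_one hzi' (hw i)]
    · exact hρ i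
  linarith [one_sub_pseudoHyperbolicDist_mul_le hzi' (hw i)]

lemma iSup_lt_of_tendsto {x : ℕ → ℝ} {c L : ℝ} (hx : ∀ n, x n < c)
    (hlim : Tendsto x atTop (𝓝 L)) (hL : L < c) : ⨆ n, x n < c := by
  obtain ⟨m, hLm, hmc⟩ := exists_between hL
  obtain ⟨N, hN⟩ := eventually_atTop.1 (hlim.eventually (gt_mem_nhds hLm))
  obtain ⟨n₀, -, hn₀⟩ := (Finset.range (N + 1)).exists_max_image x Finset.nonempty_range_add_one
  refine (ciSup_le fun n => ?_).trans_lt (max_lt hmc (hx n₀))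
  rcases lt_or_ge n N with h | h
  · exact le_max_of_le_right (hn₀ n (Finset.mem_range.2 (by omega)))
  · exact le_max_of_le_left (hN n h).le

namespace Complex

variable {E : Type*} [NormedAddCommGroup E] [NormedSpace ℂ E] [Nontrivial E]

theorem le_norm_of_forall_mem_frontier_le_norm {f : E → ℂ} {U : Set E}
    (hU : Bornology.IsBounded U) (hd : DiffContOnCl ℂ f U) (hf : ∀ z ∈ closure U, f z ≠ 0)
    {δ : ℝ} (hδ : ∀ z ∈ frontier U, δ ≤ ‖f z‖) {z : E} (hz : z ∈ closure U) : δ ≤ ‖f z‖ := by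
  rcases le_or_gt δ 0 with hδ0 | hδ0
  · exact hδ0.trans (norm_nonneg _)
  have := norm_le_of_forall_mem_frontier_norm_le hU (hd.inv hf)
    (fun ζ hζ => by rw [Pi.inv_apply, norm_inv]; exact inv_anti₀ hδ0 (hδ ζ hζ)) hz
  rwa [Pi.inv_apply, norm_inv, inv_le_inv₀ (norm_pos_iff.2 (hf z hz)) hδ0] at this

end Complex

section LocallyUniformLimit

variable {ι : Type*} {l : Filter ι} {F : ι → ℂ → ℂ} {f : ℂ → ℂ} {U : Set ℂ} {u : ι → ℂ}
  {u₀ : ℂ}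

lemma eventually_mem_closedBall_of_tendsto_apply (hF : ∀ i, DifferentiableOn ℂ (F i) U)
    (hFinj : ∀ i, InjOn (F i) U) (hconv : TendstoLocallyUniformlyOn F f l U)
    (hf : ContinuousOn f U) (hfinj : InjOn f U) (hu : ∀ i, u i ∈ U)
    (hlim : Tendsto (fun i => F i (u i)) l (𝓝 (f u₀))) {r : ℝ} (hr : 0 < r)
    (hrU : closedBall u₀ r ⊆ U) : ∀ᶠ i in l, u i ∈ closedBall u₀ r := by
  have hu₀ : u₀ ∈ U := hrU (mem_closedBall_self hr.le)
  obtain ⟨δ, hδ, hδf⟩ : ∃ δ > 0, ∀ ζ ∈ sphere u₀ r, δ ≤ dist (f ζ) (f u₀) :=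
    (isCompact_sphere u₀ r).exists_forall_le'
      (continuous_dist.comp_continuousOn
        ((hf.mono (sphere_subset_closedBall.trans hrU)).prodMk continuousOn_const))
      fun ζ hζ => dist_pos.2 fun h => (ne_of_mem_sphere hζ hr.ne')
        (hfinj (hrU (sphere_subset_closedBall hζ)) hu₀ h)
  have hunif : TendstoUniformlyOn F f l (closedBall u₀ r) :=
    (tendstoLocallyUniformlyOn_iff_tendstoUniformlyOn_of_compact (isCompact_closedBall _ _)).1
      (hconv.mono hrU)
  filter_upwards [Metric.tendstoUniformlyOn_iff.1 hunif (δ / 4) (by positivity),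
    Metric.tendsto_nhds.1 hlim (δ / 4) (by positivity)] with i hFi hui
  by_contra hout
  have hne : ∀ ζ ∈ closedBall u₀ r, F i ζ - F i (u i) ≠ 0 := fun ζ hζ h =>
    hout (hFinj i (hrU hζ) (hu i) (sub_eq_zero.1 h) ▸ hζ)
  have hdiff : DiffContOnCl ℂ (fun ζ => F i ζ - F i (u i)) (ball u₀ r) :=
    (((hF i).mono hrU).sub_const _).diffContOnCl_ball subset_rfl
  have hsphere : ∀ ζ ∈ frontier (ball u₀ r), δ / 2 ≤ ‖F i ζ - F i (u i)‖ := by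
    intro ζ hζ
    rw [frontier_ball u₀ hr.ne'] at hζ
    rw [← dist_eq_norm]
    linarith [hδf ζ hζ, dist_triangle4 (f ζ) (F i ζ) (F i (u i)) (f u₀),
      hFi ζ (sphere_subset_closedBall hζ)]
  have hcentre : ‖F i u₀ - F i (u i)‖ < δ / 2 := by
    rw [← dist_eq_norm]
    linarith [dist_triangle (F i u₀) (f u₀) (F i (u i)), dist_comm (F i u₀) (f u₀),
      dist_comm (F i (u i)) (f u₀), hFi u₀ (mem_closedBall_self hr.le)]
  exact hcentre.not_ge (Complex.le_norm_of_forall_mem_frontier_le_norm isBounded_ball hdiff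
    (by rwa [closure_ball u₀ hr.ne']) hsphere (by simp [closure_ball u₀ hr.ne', hr.le]))

lemma tendsto_of_tendsto_apply_of_injOn (hU : IsOpen U) (hF : ∀ i, DifferentiableOn ℂ (F i) U)
    (hFinj : ∀ i, InjOn (F i) U) (hconv : TendstoLocallyUniformlyOn F f l U)
    (hf : ContinuousOn f U) (hfinj : InjOn f U) (hu : ∀ i, u i ∈ U) (hu₀ : u₀ ∈ U)
    (hlim : Tendsto (fun i => F i (u i)) l (𝓝 (f u₀))) : Tendsto u l (𝓝 u₀) := by
  obtain ⟨r₀, hr₀, hr₀U⟩ := nhds_basis_closedBall.mem_iff.1 (hU.mem_nhds hu₀)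
  refine nhds_basis_closedBall.tendsto_right_iff.2 fun ε hε => ?_
  filter_upwards [eventually_mem_closedBall_of_tendsto_apply hF hFinj hconv hf hfinj hu hlim
    (lt_min hε hr₀) ((closedBall_subset_closedBall (min_le_right _ _)).trans hr₀U)] with i hi
  exact closedBall_subset_closedBall (min_le_left _ _) hi

end LocallyUniformLimit

lemma mem_image_of_tendstoLocallyUniformlyOn {ι α β : Type*} [TopologicalSpace α]
    [UniformSpace β] [T2Space β] {l : Filter ι} [l.NeBot] {F : ι → α → β} {f : α → β}
    {U K : Set α} {w : ι → α} {b : β} (hconv : TendstoLocallyUniformlyOn F f l U)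
    (hf : ContinuousOn f U) (hK : IsCompact K) (hKU : K ⊆ U) (hw : ∀ᶠ i in l, w i ∈ K)
    (hb : Tendsto (fun i => F i (w i)) l (𝓝 b)) : b ∈ f '' K := by
  obtain ⟨x, hxK, hx⟩ := hK.exists_mapClusterPt (le_principal_iff.2 hw)
  set l' := l ⊓ comap w (𝓝 x)
  have : l'.NeBot := by
    rw [← map_neBot_iff w, Filter.push_pull, inf_comm]
    exact hx.neBot
  have hconv' : TendstoLocallyUniformlyOn F f l' U := fun s hs y hy =>
    let ⟨t, ht, H⟩ := hconv s hs y hy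
    ⟨t, ht, H.filter_mono inf_le_left⟩
  have hwx : Tendsto w l' (𝓝[U] x) :=
    tendsto_nhdsWithin_iff.2 ⟨tendsto_comap.mono_left inf_le_right,
      (hw.filter_mono inf_le_left).mono fun i hi => hKU hi⟩
  exact ⟨x, hxK, tendsto_nhds_unique (hconv'.tendsto_comp (hf x (hKU hxK)) (hKU hxK) hwx)
    (hb.mono_left inf_le_left)⟩

theorem stmt14_general (g : ℕ → ℂ → ℂ) (glim : ℂ → ℂ)
    (hhol : ∀ n, DifferentiableOn ℂ (g n) {z : ℂ | ‖z‖ < 1})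
    (hinj : ∀ n, Set.InjOn (g n) {z : ℂ | ‖z‖ < 1})
    (hinjlim : Set.InjOn glim {z : ℂ | ‖z‖ < 1})
    (hconv : TendstoLocallyUniformlyOn g glim atTop {z : ℂ | ‖z‖ < 1})
    (z w : ℕ → ℂ) (hz : ∀ n, ‖z n‖ < 1) (hw : ∀ n, ‖w n‖ < 1)
    (z₀ : ℂ) (hz₀ : ‖z₀‖ < 1) (b : ℂ)
    (hgz : Tendsto (fun n => g n (z n)) atTop (nhds (glim z₀)))
    (hgw : Tendsto (fun n => g n (w n)) atTop (nhds b)) :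
    b ∈ glim '' {z : ℂ | ‖z‖ < 1} ↔
      (⨆ n, ‖z n - w n‖ / ‖1 - (starRingEnd ℂ) (w n) * z n‖) < 1 := by
  have hopen : IsOpen {z : ℂ | ‖z‖ < 1} := isOpen_lt continuous_norm continuous_const
  have hcont : ContinuousOn glim {z : ℂ | ‖z‖ < 1} :=
    hconv.continuousOn (.of_forall fun n => (hhol n).continuousOn)
  have hzc : Tendsto z atTop (𝓝 z₀) :=
    tendsto_of_tendsto_apply_of_injOn hopen hhol hinj hconv hcont hinjlim hz hz₀ hgz
  change _ ↔ (⨆ n, pseudoHyperbolicDist (z n) (w n)) < 1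
  constructor
  · rintro ⟨w₀, hw₀, rfl⟩
    have hwc : Tendsto w atTop (𝓝 w₀) :=
      tendsto_of_tendsto_apply_of_injOn hopen hhol hinj hconv hcont hinjlim hw hw₀ hgw
    exact iSup_lt_of_tendsto (fun n => pseudoHyperbolicDist_lt_one (hz n) (hw n))
      (hzc.pseudoHyperbolicDist hwc hz₀ (le_of_lt hw₀)) (pseudoHyperbolicDist_lt_one hz₀ hw₀)
  · intro hsup
    have hbdd : BddAbove (range fun n => pseudoHyperbolicDist (z n) (w n)) :=
      ⟨1, forall_mem_range.2 fun n => (pseudoHyperbolicDist_lt_one (hz n) (hw n)).le⟩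
    obtain ⟨R, hR, hwR⟩ :=
      exists_lt_one_eventually_norm_le_of_tendsto hzc hz₀ hw (le_ciSup hbdd) hsup
    have hRU : closedBall 0 R ⊆ {z : ℂ | ‖z‖ < 1} := fun x hx =>
      (mem_closedBall_zero_iff.1 hx).trans_lt hR
    exact image_mono hRU (mem_image_of_tendstoLocallyUniformlyOn hconv hcont
      (isCompact_closedBall 0 R) hRU (hwR.mono fun n => mem_closedBall_zero_iff.2) hgw)

/-- Let `g n, g : 𝔻 → ℂ` be injective holomorphic functions with
`g n → g` locally uniformly on `𝔻`. Let `(z n), (w n)` be sequences in `𝔻`, `z₀ ∈ 𝔻`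
and `b ∈ ℂ` with `g n (z n) → g z₀` and `g n (w n) → b`. Then `b ∈ g(𝔻)` if and only
if `sup_n ρ(z n, w n) < 1`, where `ρ` is the pseudo-hyperbolic distance. -/
theorem stmt14 (g : ℕ → ℂ → ℂ) (glim : ℂ → ℂ)
    (hhol : ∀ n, DifferentiableOn ℂ (g n) {z : ℂ | ‖z‖ < 1})
    (hinj : ∀ n, Set.InjOn (g n) {z : ℂ | ‖z‖ < 1})
    (hhollim : DifferentiableOn ℂ glim {z : ℂ | ‖z‖ < 1})
    (hinjlim : Set.InjOn glim {z : ℂ | ‖z‖ < 1})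
    (hconv : TendstoLocallyUniformlyOn g glim atTop {z : ℂ | ‖z‖ < 1})
    (z w : ℕ → ℂ) (hz : ∀ n, ‖z n‖ < 1) (hw : ∀ n, ‖w n‖ < 1)
    (z₀ : ℂ) (hz₀ : ‖z₀‖ < 1) (b : ℂ)
    (hgz : Tendsto (fun n => g n (z n)) atTop (nhds (glim z₀)))
    (hgw : Tendsto (fun n => g n (w n)) atTop (nhds b)) :
    b ∈ glim '' {z : ℂ | ‖z‖ < 1} ↔
      (⨆ n, ‖z n - w n‖ / ‖1 - (starRingEnd ℂ) (w n) * z n‖) < 1 :=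
  stmt14_general g glim hhol hinj hinjlim hconv z w hz hw z₀ hz₀ b hgz hgw
end
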